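/- Ball locality of matrix powers: if x, x' : n → R satisfy x v = x' v for every vertex v that is reachable from u in G_A with dist_{G_A}(u,v) ≤ p, then ((A^p) *ᵥ x) u = ((A^p) *ᵥ x') u; i.e., the u-th entry of A^p x depends only on the entries of x in the ball of radius p around u. -/

import Mathlib

open Matrix

/-- The adjacency graph `G_A` of a symmetric square matrix `A`:
vertices are the indices, and `u` is adjacent to `v` iff `u ≠ v` and `A u v ≠ 0`. -/
def Matrix.adjGraph {R : Type*} [CommRing R] {n : Type*}
    (A : Matrix n n R) (hA : Aᵀ = A) : SimpleGraph n where
  Adj u v := u ≠ v ∧ A u v ≠ 0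
  symm := ⟨by
    intro u v h
    refine ⟨h.1.symm, fun hz => h.2 ?_⟩
    rw [← hA, Matrix.transpose_apply]
    exact hz⟩
  loopless := ⟨fun u h => h.1 rfl⟩

/-!
Since `(A ^ (p + 1) *ᵥ x) u = ∑ w, A u w * (A ^ p *ᵥ x) w` and `A u w ≠ 0` only for `w = u` or
`w` adjacent to `u`, induction on `p` reduces the claim to the balls of radius `p` around the
neighbours of `u`, all of which lie in the ball of radius `p + 1` around `u` by the triangle
inequality for the extended graph distance.
-/

theorem Matrix.mulVec_apply_congr {R m n : Type*} [NonUnitalNonAssocSemiring R] [Fintype n]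
    {A : Matrix m n R} {x x' : n → R} {u : m} (h : ∀ w, A u w ≠ 0 → x w = x' w) :
    (A *ᵥ x) u = (A *ᵥ x') u := by
  simp only [mulVec, dotProduct]
  refine Finset.sum_congr rfl fun w _ => ?_
  by_cases hAuw : A u w = 0
  · simp [hAuw]
  · rw [h w hAuw]

theorem Matrix.pow_mulVec_apply_congr_of_edist_le {R n : Type*} [Semiring R] [Fintype n]
    [DecidableEq n] {A : Matrix n n R} {G : SimpleGraph n}
    (hG : ∀ u w, A u w ≠ 0 → G.Adj u w ∨ u = w) {x x' : n → R} (p : ℕ) {u : n}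
    (h : ∀ v, G.edist u v ≤ p → x v = x' v) :
    (A ^ p *ᵥ x) u = (A ^ p *ᵥ x') u := by
  induction p generalizing u with
  | zero => simpa using h u (by simp)
  | succ p ih =>
    rw [pow_succ', ← mulVec_mulVec, ← mulVec_mulVec]
    refine mulVec_apply_congr fun w hAuw => ih fun v hwv => h v ?_
    have huw : G.edist u w ≤ 1 := SimpleGraph.edist_le_one_iff_adj_or_eq.mpr (hG u w hAuw)
    calc G.edist u v ≤ G.edist u w + G.edist w v := G.edist_triangle
      _ ≤ 1 + p := add_le_add huw hwv
      _ = (p + 1 : ℕ) := by push_cast; ring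

/-- **Ball locality of matrix powers.**
Let `A` be a symmetric square matrix with adjacency graph `G_A`. If two vectors `x` and
`x'` agree on every vertex `v` reachable from `u` in `G_A` with `dist u v ≤ p`, then the
`u`-th entries of `A^p *ᵥ x` and `A^p *ᵥ x'` coincide: the `u`-th entry of `A^p x`
depends only on the entries of `x` in the ball of radius `p` around `u`. -/
theorem matrix_power_ball_locality
    {R : Type*} [CommRing R] {n : Type*} [Fintype n] [DecidableEq n]
    (A : Matrix n n R) (hA : Aᵀ = A)
    (u : n) (p : ℕ) (x x' : n → R)
    (hxx : ∀ v : n, (A.adjGraph hA).Reachable u v →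
      (A.adjGraph hA).dist u v ≤ p → x v = x' v) :
    (A ^ p).mulVec x u = (A ^ p).mulVec x' u := by
  have hsupport : ∀ u w, A u w ≠ 0 → (A.adjGraph hA).Adj u w ∨ u = w := fun u w hAuw =>
    (eq_or_ne u w).elim Or.inr fun hne => Or.inl ⟨hne, hAuw⟩
  refine pow_mulVec_apply_congr_of_edist_le hsupport p fun v huv => ?_
  have hreach : (A.adjGraph hA).Reachable u v :=
    SimpleGraph.reachable_of_edist_ne_top (ne_top_of_le_ne_top (by simp) huv)
  exact hxx v hreach (by exact_mod_cast hreach.coe_dist_eq_edist ▸ huv)
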